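/- arXiv:1107.4812 — 2 statements merged into one kernel-verified Lean document; each statement's English description precedes it below -/
import Mathlib

section
/- Let n ≥ 1, m > 2n, and let σ be a permutation of {1,…,m} with no fixed points whose cycle decomposition has at least two (non-trivial) cycles. Then σ contains some permutation τ of {1,…,m′} with m′ ≤ m−2 and ℓ(τ) ≥ n. -/
/-!
Call two positions adjacent when they form an inversion of `σ`. As `σ` has no fixed point, every
position lies in an inversion: for an excedance `x < σ x` there are more values below `σ x` than
positions below `x`, so some `y > x` has `σ y < σ x`. A graph on `c ≥ 4` vertices without isolated
vertices has two vertices whose deletion leaves at least `(c - 2) / 2` edges: average over pairs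
if there are at least `c / 2 + 2` edges, and otherwise delete two leaves. Deleting the
corresponding two positions of `σ` leaves a pattern of length `m - 2` with at least
`(m - 2) / 2 > n - 1` inversions; `m ≥ 4` because `σ` has two cycles of length at least `2`.
-/

/-- The (Coxeter) length of a permutation: its number of inversions,
i.e. pairs `i < j` with `σ i > σ j`. -/
def invCount {m : ℕ} (σ : Equiv.Perm (Fin m)) : ℕ :=
  (Finset.univ.filter (fun p : Fin m × Fin m => p.1 < p.2 ∧ σ p.2 < σ p.1)).card

/-- `σ` pattern-contains `π`: there are indices `i_1 < ⋯ < i_k` such that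
`σ (i_a) < σ (i_b)` iff `π a < π b`. -/
def PatternContains {n k : ℕ} (σ : Equiv.Perm (Fin n)) (π : Equiv.Perm (Fin k)) : Prop :=
  ∃ f : Fin k ↪o Fin n, ∀ a b : Fin k, σ (f a) < σ (f b) ↔ π a < π b

open Finset

section EdgeFinset

/- A finset `E` of pairs is read as the edge set of a multigraph on `V`, with `p` joining `p.1` and
`p.2`; it is loopless when `p.1 ≠ p.2` for all `p ∈ E`. -/

variable {V : Type*} [DecidableEq V]

def edgesWithin (E : Finset (V × V)) (S : Finset V) : Finset (V × V) :=
  E.filter fun p => p.1 ∈ S ∧ p.2 ∈ S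

def edgeDegree (E : Finset (V × V)) (v : V) : ℕ :=
  #(E.filter fun p => p.1 = v ∨ p.2 = v)

variable [Fintype V]

theorem sum_edgeDegree (E : Finset (V × V)) (hloop : ∀ p ∈ E, p.1 ≠ p.2) :
    ∑ v, edgeDegree E v = 2 * #E := by
  simp only [edgeDegree, card_filter]
  rw [sum_comm, mul_comm, ← smul_eq_mul, ← sum_const]
  refine sum_congr rfl fun p hp => ?_
  rw [← card_filter, ← card_pair (hloop p hp)]
  congr 1
  ext v
  simp [eq_comm]

theorem card_edgesWithin_compl_pair_add_edgeDegree (E : Finset (V × V)) (a b : V) :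
    #(edgesWithin E {a, b}ᶜ) + edgeDegree E a + edgeDegree E b =
      #E + #(E.filter fun p => (p.1 = a ∨ p.2 = a) ∧ (p.1 = b ∨ p.2 = b)) := by
  have hsplit := card_filter_add_card_filter_not (s := E)
    fun p => p.1 = a ∨ p.2 = a ∨ p.1 = b ∨ p.2 = b
  have hwithin : edgesWithin E {a, b}ᶜ =
      E.filter fun p => ¬(p.1 = a ∨ p.2 = a ∨ p.1 = b ∨ p.2 = b) := by
    unfold edgesWithin
    congr 1
    ext p
    simp only [mem_compl, mem_insert, mem_singleton]
    tauto
  have hincident : (E.filter fun p => p.1 = a ∨ p.2 = a ∨ p.1 = b ∨ p.2 = b) =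
      (E.filter fun p => p.1 = a ∨ p.2 = a) ∪ E.filter fun p => p.1 = b ∨ p.2 = b := by
    rw [← filter_or]
    congr 1
    ext p
    tauto
  rw [filter_and, edgeDegree, edgeDegree, hwithin, add_assoc,
    ← card_union_add_card_inter, ← hincident]
  omega

theorem card_le_card_edgesWithin_compl_pair_add_edgeDegree (E : Finset (V × V)) (a b : V) :
    #E ≤ #(edgesWithin E {a, b}ᶜ) + edgeDegree E a + edgeDegree E b := by
  rw [card_edgesWithin_compl_pair_add_edgeDegree]
  exact Nat.le_add_right _ _

theorem card_lt_card_edgesWithin_compl_pair_add_edgeDegree {E : Finset (V × V)} {p : V × V}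
    (hp : p ∈ E) :
    #E < #(edgesWithin E {p.1, p.2}ᶜ) + edgeDegree E p.1 + edgeDegree E p.2 := by
  rw [card_edgesWithin_compl_pair_add_edgeDegree]
  exact Nat.lt_add_of_pos_right (card_pos.2 ⟨p, by simp [hp]⟩)

theorem sum_card_edgesWithin_compl_pair (E : Finset (V × V)) (hloop : ∀ p ∈ E, p.1 ≠ p.2) :
    ∑ q ∈ univ.offDiag, #(edgesWithin E {q.1, q.2}ᶜ) =
      #E * ((Fintype.card V - 2) * (Fintype.card V - 3)) := by
  simp only [edgesWithin, card_filter]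
  rw [sum_comm, ← smul_eq_mul, ← sum_const]
  refine sum_congr rfl fun p hp => ?_
  rw [← card_filter]
  have hfilter : (univ.offDiag.filter fun q : V × V => p.1 ∈ ({q.1, q.2}ᶜ : Finset V) ∧
      p.2 ∈ ({q.1, q.2}ᶜ : Finset V)) = ({p.1, p.2}ᶜ : Finset V).offDiag := by
    ext q
    simp only [mem_filter, mem_offDiag, mem_univ, mem_compl, mem_insert, mem_singleton]
    tauto
  rw [hfilter, offDiag_card, card_compl, card_pair (hloop p hp), ← Nat.mul_sub_one, Nat.sub_sub]

theorem exists_pair_of_card_add_four_le_two_mul_card (E : Finset (V × V))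
    (hloop : ∀ p ∈ E, p.1 ≠ p.2) (hV : 4 ≤ Fintype.card V)
    (hdense : Fintype.card V + 4 ≤ 2 * #E) :
    ∃ a b, a ≠ b ∧ Fintype.card V ≤ 2 * (#(edgesWithin E {a, b}ᶜ) + 1) := by
  by_contra! hsmall
  set c := Fintype.card V
  have hsum : 2 * (#E * ((c - 2) * (c - 3))) ≤ (c * c - c) * (c - 3) := by
    rw [← sum_card_edgesWithin_compl_pair E hloop, mul_sum]
    calc ∑ q ∈ univ.offDiag, 2 * #(edgesWithin E {q.1, q.2}ᶜ)
        ≤ ∑ _q ∈ univ.offDiag, (c - 3) := sum_le_sum fun q hq => by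
          have := hsmall q.1 q.2 (mem_offDiag.1 hq).2.2
          omega
      _ = (c * c - c) * (c - 3) := by rw [sum_const, offDiag_card, card_univ, smul_eq_mul]
  obtain ⟨d, hd⟩ : ∃ d, c = d + 4 := ⟨c - 4, by omega⟩
  have h2 : c - 2 = d + 2 := by omega
  have h3 : c - 3 = d + 1 := by omega
  have hc : c * c - c = (d + 4) * (d + 3) := by
    rw [hd, ← Nat.mul_sub_one]
    rfl
  rw [h2, h3, hc] at hsum
  rw [hd] at hdense
  nlinarith [Nat.mul_le_mul_right ((d + 2) * (d + 1)) hdense]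

theorem card_filter_edgeDegree_eq_one_le (E : Finset (V × V))
    (hleafEdge : ∀ p ∈ E, edgeDegree E p.1 = 1 → edgeDegree E p.2 ≠ 1) :
    #(univ.filter fun v => edgeDegree E v = 1) ≤ #E := by
  have hedge : ∀ v ∈ univ.filter fun v => edgeDegree E v = 1,
      ∃ p ∈ E, p.1 = v ∨ p.2 = v := by
    intro v hv
    obtain ⟨p, hp⟩ := card_pos.1 ((mem_filter.1 hv).2.symm ▸ Nat.one_pos)
    exact ⟨p, mem_filter.1 hp⟩
  choose! f hfE hf using hedge
  refine card_le_card_of_injOn f (fun v hv => hfE v hv) fun v hv w hw hvw => ?_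
  have hv1 := (mem_filter.1 hv).2
  have hw1 := (mem_filter.1 hw).2
  have hp := hleafEdge _ (hfE v hv)
  have hv' := hf v hv
  have hw' := hf w hw
  rw [← hvw] at hw'
  grind

theorem two_mul_card_le_two_mul_card_add_card_filter_edgeDegree_eq_one (E : Finset (V × V))
    (hloop : ∀ p ∈ E, p.1 ≠ p.2) (hpos : ∀ v, 0 < edgeDegree E v) :
    2 * Fintype.card V ≤ 2 * #E + #(univ.filter fun v => edgeDegree E v = 1) := by
  calc 2 * Fintype.card V = ∑ _v : V, 2 := by rw [sum_const, card_univ, smul_eq_mul, mul_comm]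
    _ ≤ ∑ v, (edgeDegree E v + if edgeDegree E v = 1 then 1 else 0) :=
        sum_le_sum fun v _ => by have := hpos v; split <;> omega
    _ = 2 * #E + #(univ.filter fun v => edgeDegree E v = 1) := by
        rw [sum_add_distrib, sum_edgeDegree E hloop, card_filter]

theorem exists_pair_card_le_two_mul_card_edgesWithin_compl (E : Finset (V × V))
    (hloop : ∀ p ∈ E, p.1 ≠ p.2) (hpos : ∀ v, 0 < edgeDegree E v) (hV : 4 ≤ Fintype.card V) :
    ∃ a b, a ≠ b ∧ Fintype.card V ≤ 2 * (#(edgesWithin E {a, b}ᶜ) + 1) := by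
  by_cases hdense : Fintype.card V + 4 ≤ 2 * #E
  · exact exists_pair_of_card_add_four_le_two_mul_card E hloop hV hdense
  set leaves := univ.filter fun v => edgeDegree E v = 1
  have hcount : 2 * Fintype.card V ≤ 2 * #E + #leaves :=
    two_mul_card_le_two_mul_card_add_card_filter_edgeDegree_eq_one E hloop hpos
  have hleaves_le : #leaves ≤ Fintype.card V := card_le_univ _
  by_cases hleafEdge : ∃ p ∈ E, edgeDegree E p.1 = 1 ∧ edgeDegree E p.2 = 1
  · obtain ⟨p, hp, h1, h2⟩ := hleafEdge
    have := card_lt_card_edgesWithin_compl_pair_add_edgeDegree hp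
    exact ⟨p.1, p.2, hloop p hp, by omega⟩
  -- `hcount` forces many leaves; as no edge joins two of them, `hleaves` forces `c + 2 ≤ 2 #E`,
  -- so deleting two leaves, which costs two edges, is good enough.
  push Not at hleafEdge
  have hleaves : #leaves ≤ #E := card_filter_edgeDegree_eq_one_le E hleafEdge
  obtain ⟨a, ha, b, hb, hab⟩ := one_lt_card.1 (by omega : 1 < #leaves)
  have := card_le_card_edgesWithin_compl_pair_add_edgeDegree E a b
  rw [(mem_filter.1 ha).2, (mem_filter.1 hb).2] at this
  exact ⟨a, b, hab, by omega⟩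

end EdgeFinset

namespace Equiv.Perm

variable {m : ℕ}

def inversions (σ : Perm (Fin m)) : Finset (Fin m × Fin m) :=
  univ.filter fun p => p.1 < p.2 ∧ σ p.2 < σ p.1

theorem fst_ne_snd_of_mem_inversions {σ : Perm (Fin m)} {p : Fin m × Fin m}
    (hp : p ∈ σ.inversions) : p.1 ≠ p.2 :=
  (mem_filter.1 hp).2.1.ne

theorem exists_lt_apply_lt_of_lt_apply {σ : Perm (Fin m)} {x : Fin m} (hx : x < σ x) :
    ∃ y, x < y ∧ σ y < σ x := by
  have hcard : #(Iio x) < #((Iio (σ x)).map σ.symm.toEmbedding) := by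
    rwa [card_map, Fin.card_Iio, Fin.card_Iio]
  obtain ⟨y, hy, hyx⟩ := exists_mem_notMem_of_card_lt_card hcard
  rw [mem_map_equiv, symm_symm, mem_Iio] at hy
  exact ⟨y, (not_lt.1 (mem_Iio.not.1 hyx)).lt_of_ne (by rintro rfl; exact hy.false), hy⟩

theorem edgeDegree_inversions_pos {σ : Perm (Fin m)} {x : Fin m} (hx : σ x ≠ x) :
    0 < edgeDegree σ.inversions x := by
  rw [edgeDegree, card_pos]
  rcases hx.lt_or_gt with h | h
  · obtain ⟨z, hz, hzx⟩ :=
      exists_lt_apply_lt_of_lt_apply (σ := σ⁻¹) (x := σ x) (by simpa using h)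
    refine ⟨(σ⁻¹ z, x), mem_filter.2 ⟨?_, Or.inr rfl⟩⟩
    rw [coe_inv, symm_apply_apply] at hzx
    simp only [inversions, mem_filter, mem_univ, true_and, coe_inv, apply_symm_apply]
    exact ⟨hzx, hz⟩
  · obtain ⟨y, hxy, hσ⟩ := exists_lt_apply_lt_of_lt_apply h
    exact ⟨(x, y), mem_filter.2 ⟨by simp [inversions, hxy, hσ], Or.inl rfl⟩⟩

theorem exists_patternContains_card_edgesWithin_inversions_le (σ : Perm (Fin m))
    (S : Finset (Fin m)) :
    ∃ τ : Perm (Fin #S), PatternContains σ τ ∧ #(edgesWithin σ.inversions S) ≤ invCount τ := by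
  set T := S.map σ.toEmbedding
  let e := S.orderIsoOfFin rfl
  let e' := T.orderIsoOfFin (card_map _)
  let τ : Perm (Fin #S) :=
    e.toEquiv.trans ((σ.subtypeEquiv fun x => by simp [T]).trans e'.symm.toEquiv)
  have hτ : ∀ a, σ (e a) = e' (τ a) := fun a => by simp [τ]
  have hlt : ∀ a b, σ (e a) < σ (e b) ↔ τ a < τ b := fun a b => by
    rw [hτ, hτ, Subtype.coe_lt_coe, e'.lt_iff_lt]
  refine ⟨τ, ⟨S.orderEmbOfFin rfl, hlt⟩, card_le_card_of_surjOn (fun q => (e q.1, e q.2)) ?_⟩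
  rintro ⟨x, y⟩ hxy
  rw [mem_coe, edgesWithin, mem_filter, inversions, mem_filter] at hxy
  obtain ⟨⟨-, hxy, hσ⟩, hx, hy⟩ := hxy
  refine ⟨(e.symm ⟨x, hx⟩, e.symm ⟨y, hy⟩), ?_, by simp⟩
  rw [mem_coe, mem_filter, e.symm.lt_iff_lt, ← hlt]
  simpa using ⟨hxy, hσ⟩

theorem four_le_card_of_two_le_card_cycleType {α : Type*} [Fintype α] [DecidableEq α]
    {σ : Perm α} (h : 2 ≤ Multiset.card σ.cycleType) : 4 ≤ Fintype.card α :=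
  calc 4 ≤ Multiset.card σ.cycleType • 2 := by rw [smul_eq_mul]; omega
    _ ≤ σ.cycleType.sum := Multiset.card_nsmul_le_sum fun _ => two_le_of_mem_cycleType
    _ ≤ Fintype.card α := sum_cycleType_le σ

end Equiv.Perm

theorem disjoint_cycles_lemma_general {n m : ℕ} (hm : 2 * n < m)
    (σ : Equiv.Perm (Fin m)) (hfpf : ∀ i : Fin m, σ i ≠ i)
    (hcycles : 2 ≤ Multiset.card σ.cycleType) :
    ∃ m' ≤ m - 2, ∃ τ : Equiv.Perm (Fin m'), n ≤ invCount τ ∧ PatternContains σ τ := by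
  obtain ⟨a, b, hab, hdeleted⟩ := exists_pair_card_le_two_mul_card_edgesWithin_compl
    σ.inversions (fun _ => Equiv.Perm.fst_ne_snd_of_mem_inversions)
    (fun x => Equiv.Perm.edgeDegree_inversions_pos (hfpf x))
    (Equiv.Perm.four_le_card_of_two_le_card_cycleType hcycles)
  obtain ⟨τ, hτ, hinv⟩ := σ.exists_patternContains_card_edgesWithin_inversions_le {a, b}ᶜ
  have hcard : #({a, b}ᶜ : Finset (Fin m)) = m - 2 := by
    rw [card_compl, card_pair hab, Fintype.card_fin]
  refine ⟨_, hcard.le, τ, ?_, hτ⟩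
  rw [Fintype.card_fin] at hdeleted
  omega

/-- Lemma 3.5: let `n ≥ 1`, `m > 2n`, and let `σ ∈ S_m` be a product of at least two
disjoint non-trivial cycles (in particular `σ` has no fixed points). Then `σ` contains
some `τ ∈ S_{m'}` with `m' ≤ m - 2` and `ℓ(τ) ≥ n`. -/
theorem disjoint_cycles_lemma {n m : ℕ} (hn : 1 ≤ n) (hm : 2 * n < m)
    (σ : Equiv.Perm (Fin m)) (hfpf : ∀ i : Fin m, σ i ≠ i)
    (hcycles : 2 ≤ Multiset.card σ.cycleType) :
    ∃ m' ≤ m - 2, ∃ τ : Equiv.Perm (Fin m'), n ≤ invCount τ ∧ PatternContains σ τ :=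
  disjoint_cycles_lemma_general hm σ hfpf hcycles
end

section
/- A permutation σ avoids 321 and satisfies ℓ(σ) ≤ 3 if and only if σ avoids 321 and avoids every permutation π of {1,…,m} with m ≤ 8 and ℓ(π) ≥ 4. (Equivalently: the Bruhat graph of σ is planar if and only if σ avoids 321 and all patterns of size at most 8 and length at least 4.) -/
/-- The pattern `321` (one-line notation `3 2 1`), as a permutation of `Fin 3`. -/
def perm321 : Equiv.Perm (Fin 3) := Equiv.swap 0 2

/-!
A pattern occurrence of `π` in `σ` maps inversions of `π` injectively to inversions of `σ`,
so `ℓ` is monotone under containment; this gives the forward direction. Conversely, if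
`ℓ(σ) ≥ 4`, the at most `8` positions involved in four inversions of `σ` carry a pattern `π`
of size at most `8` in which all four survive, so `ℓ(π) ≥ 4`.
-/

open Finset

variable {n k : ℕ}

def inversions (σ : Equiv.Perm (Fin n)) : Finset (Fin n × Fin n) :=
  univ.filter fun p => p.1 < p.2 ∧ σ p.2 < σ p.1

theorem card_inversions (σ : Equiv.Perm (Fin n)) : #(inversions σ) = invCount σ := rfl

theorem mem_inversions {σ : Equiv.Perm (Fin n)} {p : Fin n × Fin n} :
    p ∈ inversions σ ↔ p.1 < p.2 ∧ σ p.2 < σ p.1 := by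
  simp [inversions]

/-- Standardization: `π = (Tuple.sort g)⁻¹` sends each index to the rank of its entry. -/
theorem exists_perm_lt_iff_lt {α : Type*} [LinearOrder α] {g : Fin k → α}
    (hg : Function.Injective g) : ∃ π : Equiv.Perm (Fin k), ∀ a b, g a < g b ↔ π a < π b := by
  have hsorted : StrictMono (g ∘ Tuple.sort g) :=
    (Tuple.monotone_sort g).strictMono_of_injective (hg.comp (Tuple.sort g).injective)
  refine ⟨(Tuple.sort g)⁻¹, fun a b => ?_⟩
  simpa using hsorted.lt_iff_lt (a := (Tuple.sort g)⁻¹ a) (b := (Tuple.sort g)⁻¹ b)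

theorem invCount_le_of_patternContains {σ : Equiv.Perm (Fin n)}
    {π : Equiv.Perm (Fin k)} (h : PatternContains σ π) : invCount π ≤ invCount σ := by
  obtain ⟨f, hf⟩ := h
  rw [← card_inversions, ← card_inversions]
  refine card_le_card_of_injOn (fun p => (f p.1, f p.2)) (fun p hp => ?_) (fun p _ q _ hpq => ?_)
  · rw [mem_coe, mem_inversions] at hp ⊢
    exact ⟨f.lt_iff_lt.2 hp.1, (hf p.2 p.1).2 hp.2⟩
  · simp only [Prod.mk.injEq, f.injective.eq_iff] at hpq
    exact Prod.ext hpq.1 hpq.2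

theorem card_le_invCount_of_subset_range {σ : Equiv.Perm (Fin n)} {π : Equiv.Perm (Fin k)}
    {f : Fin k ↪o Fin n} (hf : ∀ a b, σ (f a) < σ (f b) ↔ π a < π b)
    {T : Finset (Fin n × Fin n)} (hT : T ⊆ inversions σ)
    (hrange : ∀ p ∈ T, p.1 ∈ Set.range f ∧ p.2 ∈ Set.range f) : #T ≤ invCount π := by
  rw [← card_inversions]
  refine card_le_card_of_surjOn (fun q : Fin k × Fin k => (f q.1, f q.2))
    (fun ⟨i, j⟩ hp => ?_)
  obtain ⟨⟨a, rfl⟩, ⟨b, rfl⟩⟩ := hrange _ hp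
  have hinv := mem_inversions.1 (hT hp)
  refine ⟨(a, b), ?_, rfl⟩
  rw [mem_coe, mem_inversions]
  exact ⟨f.lt_iff_lt.1 hinv.1, (hf b a).1 hinv.2⟩

theorem exists_patternContains_of_subset_inversions {σ : Equiv.Perm (Fin n)}
    {T : Finset (Fin n × Fin n)} (hT : T ⊆ inversions σ) :
    ∃ m ≤ 2 * #T, ∃ π : Equiv.Perm (Fin m), PatternContains σ π ∧ #T ≤ invCount π := by
  set S := T.image Prod.fst ∪ T.image Prod.snd
  have hS : #S ≤ 2 * #T := by
    calc #S ≤ #(T.image Prod.fst) + #(T.image Prod.snd) := card_union_le _ _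
      _ ≤ 2 * #T := by linarith [card_image_le (s := T) (f := Prod.fst),
                                  card_image_le (s := T) (f := Prod.snd)]
  let f := S.orderEmbOfFin rfl
  obtain ⟨π, hπ⟩ := exists_perm_lt_iff_lt (σ.injective.comp f.injective)
  refine ⟨#S, hS, π, ⟨f, hπ⟩, card_le_invCount_of_subset_range hπ hT fun p hp => ?_⟩
  rw [range_orderEmbOfFin]
  exact ⟨mem_union_left _ (mem_image_of_mem _ hp), mem_union_right _ (mem_image_of_mem _ hp)⟩

/-- Corollary 4.3: a permutation `σ` avoids `321` and has `ℓ(σ) ≤ 3` (equivalently, its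
Bruhat graph is planar) iff `σ` avoids `321` and all permutations `π ∈ S_m` with
`m ≤ 8` and `ℓ(π) ≥ 4`. -/
theorem planar_iff_avoids_finite_list {N : ℕ} (σ : Equiv.Perm (Fin N)) :
    (¬ PatternContains σ perm321 ∧ invCount σ ≤ 3) ↔
      (¬ PatternContains σ perm321 ∧
        ∀ m ≤ 8, ∀ π : Equiv.Perm (Fin m), 4 ≤ invCount π → ¬ PatternContains σ π) := by
  refine and_congr_right fun _ => ⟨fun hσ m _ π hπ hcon => ?_, fun havoid => ?_⟩
  · have := invCount_le_of_patternContains hcon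
    omega
  · by_contra! hσ
    obtain ⟨T, hT, hT4⟩ := exists_subset_card_eq (s := inversions σ) hσ
    obtain ⟨m, hm, π, hcon, hπ⟩ := exists_patternContains_of_subset_inversions hT
    exact havoid m (by omega) π (by omega) hcon
end
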